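/- Let R = B[x^{±1}; σ] be a skew Laurent polynomial ring and I a right ideal of R. If R/I is finitely generated as a right B-module, then I contains an element that is unitary with respect to x (i.e., with both terminal coefficients units in B). -/

import Mathlib

/-! Conjugation by `x` preserves `B`, so the left `B`-span of finitely many powers `xʲ` is also
stable under right multiplication by `B`. Once that span contains the finitely many generators
of `R/I` as a right `B`-module, it contains a representative of every class of `R/I`. If it is
spanned by the `xʲ` with `|j| ≤ N` and `m` represents `x^{-(N+1)} + x^{N+1}`, then
`x^{-(N+1)} + x^{N+1} - m ∈ I` has both terminal coefficients equal to `1`. -/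

theorem Int.exists_finset_subset_Icc_neg (S : Finset ℤ) : ∃ N : ℕ, S ⊆ Finset.Icc (-N : ℤ) N := by
  refine ⟨∑ j ∈ S, j.natAbs, fun j hj => ?_⟩
  have := Finset.single_le_sum (f := Int.natAbs) (fun _ _ => Nat.zero_le _) hj
  rw [Finset.mem_Icc]
  omega

theorem Finset.sum_Icc_neg_succ {M : Type*} [AddCommMonoid M] (f : ℤ → M) (N : ℕ) :
    ∑ j ∈ Icc (-(N + 1) : ℤ) (N + 1), f j =
      f (-(N + 1)) + f (N + 1) + ∑ j ∈ Icc (-N : ℤ) N, f j := by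
  rw [show (-(N + 1) : ℤ) = -N - 1 by ring, ← insert_Icc_left_eq_Icc_sub_one (by omega),
    ← insert_Icc_right_eq_Icc_add_one (by omega), sum_insert (by simp; omega), sum_insert (by simp),
    add_assoc]

open Pointwise

section

variable {R : Type*} [Ring R]

theorem Subring.toConjAct_mem_stabilizer {B : Subring R} {u : Rˣ}
    (hu : ∀ b : B, (u : R) * b * ((u⁻¹ : Rˣ) : R) ∈ B ∧ ((u⁻¹ : Rˣ) : R) * b * u ∈ B) :
    ConjAct.toConjAct u ∈ MulAction.stabilizer (ConjAct Rˣ) B := by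
  refine le_antisymm ?_ (Subring.subset_pointwise_smul_iff.2 ?_) <;>
    rintro _ ⟨b, hb, rfl⟩
  · exact (hu ⟨b, hb⟩).1
  · simpa [ConjAct.units_smul_def] using (hu ⟨b, hb⟩).2

theorem Subring.exists_mul_eq_mul_of_mem_stabilizer {B : Subring R} {u : Rˣ}
    (hu : ConjAct.toConjAct u ∈ MulAction.stabilizer (ConjAct Rˣ) B) (b : B) :
    ∃ b' : B, (u : R) * b = b' * u := by
  have hmem := Subring.smul_mem_pointwise_smul (ConjAct.toConjAct u) _ B b.2
  rw [MulAction.mem_stabilizer_iff.1 hu] at hmem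
  exact ⟨⟨_, hmem⟩, by simp [ConjAct.units_smul_def, mul_assoc]⟩

variable (B : Subring R) (x : Rˣ)

def laurentSpan (S : Finset ℤ) : Submodule B R :=
  Submodule.span B ((fun j : ℤ => ((x ^ j : Rˣ) : R)) '' S)

variable {B x}

theorem mem_laurentSpan_iff {S : Finset ℤ} {r : R} :
    r ∈ laurentSpan B x S ↔ ∃ β : ℤ → B, r = ∑ j ∈ S, (β j : R) * ((x ^ j : Rˣ) : R) := by
  rw [laurentSpan, Submodule.mem_span_image_finset_iff_exists_fun']
  simp only [Subring.smul_def, smul_eq_mul, eq_comm]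

theorem laurentSpan_mono {S T : Finset ℤ} (h : S ⊆ T) : laurentSpan B x S ≤ laurentSpan B x T :=
  Submodule.span_mono (Set.image_mono (Finset.coe_subset.2 h))

theorem mul_mem_laurentSpan (hx : ConjAct.toConjAct x ∈ MulAction.stabilizer (ConjAct Rˣ) B)
    {S : Finset ℤ} {r : R} (hr : r ∈ laurentSpan B x S) (b : B) :
    r * b ∈ laurentSpan B x S := by
  induction hr using Submodule.span_induction with
  | mem _ h =>
    obtain ⟨j, hj, rfl⟩ := h
    obtain ⟨b', hb'⟩ := Subring.exists_mul_eq_mul_of_mem_stabilizer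
      (u := x ^ j) (by simpa using zpow_mem hx j) b
    rw [hb']
    exact Submodule.smul_mem _ b' (Submodule.subset_span ⟨j, hj, rfl⟩)
  | zero => simp
  | add _ _ _ _ h₁ h₂ => simpa [add_mul] using add_mem h₁ h₂
  | smul c _ _ h => simpa [Subring.smul_def, mul_assoc] using Submodule.smul_mem _ c h

theorem exists_mem_laurentSpan
    (hsurj : Function.Surjective
      (fun f : ℤ →₀ B => f.sum fun i b => (b : R) * ((x ^ i : Rˣ) : R))) (r : R) :
    ∃ S, r ∈ laurentSpan B x S := by
  obtain ⟨f, rfl⟩ := hsurj r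
  exact ⟨f.support, Submodule.sum_mem _ fun j hj =>
    Submodule.smul_mem _ (f j) (Submodule.subset_span ⟨j, hj, rfl⟩)⟩

theorem exists_laurent_expansion_zpow_add_zpow_sub {N : ℕ} {m : R}
    (hm : m ∈ laurentSpan B x (Finset.Icc (-N) N)) :
    ∃ β : ℤ → B, ((x ^ (-(N + 1) : ℤ) : Rˣ) : R) + ((x ^ (N + 1 : ℤ) : Rˣ) : R) - m =
      ∑ j ∈ Finset.Icc (-(N + 1) : ℤ) (N + 1), (β j : R) * ((x ^ j : Rˣ) : R) ∧
      β (-(N + 1)) = 1 ∧ β (N + 1) = 1 := by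
  obtain ⟨β, rfl⟩ := mem_laurentSpan_iff.1 hm
  refine ⟨fun j => if j ∈ Finset.Icc (-N : ℤ) N then -β j else 1, ?_, by simp, by simp⟩
  rw [Finset.sum_Icc_neg_succ, sub_eq_add_neg, ← Finset.sum_neg_distrib]
  congr 1
  · simp
  · refine Finset.sum_congr rfl fun j hj => ?_
    simp only [if_pos hj, Subring.coe_neg, neg_mul]

end

theorem skewLaurent_fg_quotient_has_unitary_general {R : Type*} [Ring R] (B : Subring R)
    (x : Rˣ)
    (hconj : ∀ b : B, (x : R) * (b : R) * ((x⁻¹ : Rˣ) : R) ∈ B ∧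
      ((x⁻¹ : Rˣ) : R) * (b : R) * (x : R) ∈ B)
    (hbasis : Function.Bijective
      (fun f : ℤ →₀ B => f.sum fun i b => (b : R) * ((x ^ i : Rˣ) : R)))
    (I : Submodule Rᵐᵒᵖ R)
    (hfg : ∃ (n : ℕ) (g : Fin n → R), ∀ r : R, ∃ c : Fin n → B,
      r - ∑ i, g i * (c i : R) ∈ I) :
    ∃ α ∈ I, ∃ p q : ℤ, p ≤ q ∧ ∃ β : ℤ → B,
      α = ∑ i ∈ Finset.Icc p q, (β i : R) * ((x ^ i : Rˣ) : R) ∧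
      IsUnit (β p) ∧ IsUnit (β q) := by
  obtain ⟨n, g, hg⟩ := hfg
  have hx := Subring.toConjAct_mem_stabilizer hconj
  choose S hS using fun i => exists_mem_laurentSpan hbasis.2 (g i)
  obtain ⟨N, hN⟩ := Int.exists_finset_subset_Icc_neg (Finset.univ.biUnion S)
  have hgN : ∀ i, g i ∈ laurentSpan B x (Finset.Icc (-N) N) := fun i =>
    laurentSpan_mono ((Finset.subset_biUnion_of_mem S (Finset.mem_univ i)).trans hN) (hS i)
  obtain ⟨c, hc⟩ := hg (((x ^ (-(N + 1) : ℤ) : Rˣ) : R) + ((x ^ (N + 1 : ℤ) : Rˣ) : R))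
  obtain ⟨β, hβ, hβp, hβq⟩ := exists_laurent_expansion_zpow_add_zpow_sub
    (Submodule.sum_mem _ fun i _ => mul_mem_laurentSpan hx (hgN i) (c i))
  exact ⟨_, hc, _, _, by omega, β, hβ, hβp ▸ isUnit_one, hβq ▸ isUnit_one⟩

/-- Let `R = B[x^{±1}; σ]` be a skew Laurent polynomial ring over a
noetherian domain `B` (modelled as: `x` is a unit of `R`, conjugation by `x` preserves
`B`, and the powers `xⁱ`, `i ∈ ℤ`, form a basis of `R` as a left `B`-module), and let
`I` be a right ideal of `R`. If `R/I` is finitely generated as a right `B`-module,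
then `I` contains an element `α = Σ_{i=p}^q βᵢ xⁱ` that is unitary with respect to `x`,
i.e. with both terminal coefficients `β_p, β_q` units of `B`. -/
theorem skewLaurent_fg_quotient_has_unitary {R : Type*} [Ring R] (B : Subring R)
    [IsDomain B] (hnoeth : IsNoetherianRing B) (x : Rˣ)
    (hconj : ∀ b : B, (x : R) * (b : R) * ((x⁻¹ : Rˣ) : R) ∈ B ∧
      ((x⁻¹ : Rˣ) : R) * (b : R) * (x : R) ∈ B)
    (hbasis : Function.Bijective
      (fun f : ℤ →₀ B => f.sum fun i b => (b : R) * ((x ^ i : Rˣ) : R)))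
    (I : Submodule Rᵐᵒᵖ R)
    (hfg : ∃ (n : ℕ) (g : Fin n → R), ∀ r : R, ∃ c : Fin n → B,
      r - ∑ i, g i * (c i : R) ∈ I) :
    ∃ α ∈ I, ∃ p q : ℤ, p ≤ q ∧ ∃ β : ℤ → B,
      α = ∑ i ∈ Finset.Icc p q, (β i : R) * ((x ^ i : Rˣ) : R) ∧
      IsUnit (β p) ∧ IsUnit (β q) :=
  skewLaurent_fg_quotient_has_unitary_general B x hconj hbasis I hfg
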